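/- arXiv:2402.14181 — 2 statements merged into one kernel-verified Lean document; each statement's English description precedes it below -/
import Mathlib

section
/- For any positive integer n and any connected graph G on n vertices, the complete graph K_n is a minor of the Cartesian product G □ S_n, where S_n is the star with n leaves. -/
open SimpleGraph

/-- `G` is a minor of `H`: there is a model of `G` in `H`, i.e. a family of pairwise
disjoint branch sets, each inducing a connected subgraph of `H`, with an edge of `H`
between the branch sets of any two adjacent vertices of `G`. -/
def SimpleGraph.IsMinorOf {α : Type*} {β : Type*} (G : SimpleGraph α) (H : SimpleGraph β) :
    Prop :=
  ∃ B : α → Set β,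
    (∀ x, (H.induce (B x)).Connected) ∧
    (Pairwise fun x y => Disjoint (B x) (B y)) ∧
    (∀ ⦃x y⦄, G.Adj x y → ∃ a ∈ B x, ∃ b ∈ B y, H.Adj a b)

/-- The strong product of two simple graphs. -/
def strongProd {α β : Type*} (G : SimpleGraph α) (H : SimpleGraph β) :
    SimpleGraph (α × β) where
  Adj a b := (a.1 = b.1 ∧ H.Adj a.2 b.2) ∨ (a.2 = b.2 ∧ G.Adj a.1 b.1) ∨
             (G.Adj a.1 b.1 ∧ H.Adj a.2 b.2)
  symm := by
    constructor
    rintro a b (⟨h1, h2⟩ | ⟨h1, h2⟩ | ⟨h1, h2⟩)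
    · exact Or.inl ⟨h1.symm, h2.symm⟩
    · exact Or.inr (Or.inl ⟨h1.symm, h2.symm⟩)
    · exact Or.inr (Or.inr ⟨h1.symm, h2.symm⟩)
  loopless := by
    constructor
    rintro a (⟨_, h⟩ | ⟨_, h⟩ | ⟨h, _⟩)
    · exact H.loopless.irrefl _ h
    · exact G.loopless.irrefl _ h
    · exact G.loopless.irrefl _ h

/-- The lexicographic product of two simple graphs. -/
def lexProd {α β : Type*} (G : SimpleGraph α) (H : SimpleGraph β) :
    SimpleGraph (α × β) where
  Adj a b := G.Adj a.1 b.1 ∨ (a.1 = b.1 ∧ H.Adj a.2 b.2)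
  symm := by
    constructor
    rintro a b (h | ⟨h1, h2⟩)
    · exact Or.inl h.symm
    · exact Or.inr ⟨h1.symm, h2.symm⟩
  loopless := by
    constructor
    rintro a (h | ⟨_, h⟩)
    · exact G.loopless.irrefl _ h
    · exact H.loopless.irrefl _ h

/-- The `k × k` grid graph: vertices `{0,…,k-1}²`, two vertices adjacent iff they differ
by exactly one in exactly one coordinate. -/
def gridGraph (k : ℕ) : SimpleGraph (Fin k × Fin k) :=
  SimpleGraph.fromRel (fun a b =>
    (a.1 = b.1 ∧ a.2.val + 1 = b.2.val) ∨ (a.2 = b.2 ∧ a.1.val + 1 = b.1.val))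

/-- The star with `n` leaves: the root `none` is adjacent to each leaf `some i`. -/
def starGraph (n : ℕ) : SimpleGraph (Option (Fin n)) :=
  SimpleGraph.fromRel (fun a b => a = none ∧ b ≠ none)

/-- The subdivided star `S_{ℓ,p}`: a star with `ℓ` leaves, each edge subdivided `p-1`
times, i.e. a centre `none` with `ℓ` pendant paths `some (i, 0), …, some (i, p-1)`. -/
def subStar (ℓ p : ℕ) : SimpleGraph (Option (Fin ℓ × Fin p)) :=
  SimpleGraph.fromRel (fun a b =>
    (a = none ∧ ∃ (i : Fin ℓ) (j : Fin p), j.val = 0 ∧ b = some (i, j)) ∨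
    (∃ (i : Fin ℓ) (j k : Fin p), a = some (i, j) ∧ b = some (i, k) ∧ j.val + 1 = k.val))

/-- `G` admits a tree-decomposition of width at most `w`: there is a tree `T` (indexed by
`ℕ`) and bags such that every vertex and every edge of `G` lies in some bag, for every
vertex of `G` the set of nodes whose bag contains it induces a non-empty connected
subtree of `T`, and every bag has at most `w + 1` vertices. -/
def HasDecompWidth {V : Type*} (G : SimpleGraph V) (w : ℕ) : Prop :=
  ∃ (T : SimpleGraph ℕ) (bag : ℕ → Finset V),
    T.IsTree ∧
    (∀ v : V, ∃ i, v ∈ bag i) ∧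
    (∀ u v : V, G.Adj u v → ∃ i, u ∈ bag i ∧ v ∈ bag i) ∧
    (∀ v : V, (T.induce {i | v ∈ bag i}).Connected) ∧
    (∀ i, (bag i).card ≤ w + 1)

/-- The treewidth of a finite graph: the minimum width of a tree-decomposition. -/
noncomputable def treewidth {V : Type*} [Fintype V] (G : SimpleGraph V) : ℕ :=
  sInf { w | HasDecompWidth G w }

/-- `gm G`: the maximum `k` such that the `k × k` grid is a minor of `G`. -/
noncomputable def gridMinorNum {V : Type*} (G : SimpleGraph V) : ℕ :=
  sSup { k | (gridGraph k).IsMinorOf G }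

/-- A walk in a tree rooted at `r` is vertical if it contains at most one vertex of
each depth (distance from the root). -/
def IsVertical {V : Type*} (T : SimpleGraph V) (r : V) {u w : V} (p : T.Walk u w) : Prop :=
  ∀ x ∈ p.support, ∀ y ∈ p.support, T.dist r x = T.dist r y → x = y

/-- In the tree `T` rooted at `r`, `v` is an ancestor of `w`: `v` lies on the unique
path from `r` to `w` (in a tree this is equivalent to this distance identity). -/
def Ancestor {V : Type*} (T : SimpleGraph V) (r v w : V) : Prop :=
  T.dist r w = T.dist r v + T.dist v w

/-- Two vertices of a rooted tree are related if one is an ancestor of the other. -/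
def Related {V : Type*} (T : SimpleGraph V) (r v w : V) : Prop :=
  Ancestor T r v w ∨ Ancestor T r w v

/-- The height of `v` in the tree `T` rooted at `r`: the maximum order (number of
vertices) of a vertical path whose upper (minimum-depth) endpoint is `v`. -/
noncomputable def height {V : Type*} (T : SimpleGraph V) (r v : V) : ℕ :=
  sSup { n | ∃ (w : V) (p : T.Walk v w), p.IsPath ∧ IsVertical T r p ∧
      (∀ x ∈ p.support, T.dist r v ≤ T.dist r x) ∧ p.support.length = n }

/-- The radius of a finite graph: the least `e` such that some vertex is within
distance `e` of every vertex. -/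
noncomputable def graphRadius {V : Type*} [Fintype V] (T : SimpleGraph V) : ℕ :=
  sInf { e | ∃ v, ∀ w, T.dist v w ≤ e }

/-
The branch set of `v` is the copy of `G` sitting over the leaf `leaf v`, together with the
single vertex `(v, r)` over the centre. It is connected because `G` is and `(v, r)` is
adjacent to `(v, leaf v)`; branch sets are disjoint because the leaves are distinct and differ
from the centre; and `(v, r)` is adjacent to `(v, leaf w)` in the branch set of `w`.
-/

namespace SimpleGraph

variable {α β : Type*} {G : SimpleGraph α} (H : SimpleGraph β)

theorem Connected.induce_range_boxProd_left (hG : G.Connected) (b : β) :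
    ((G □ H).induce (Set.range fun a => (a, b))).Connected := by
  let f : G →g (G □ H).induce (Set.range fun a => (a, b)) :=
    { toFun a := ⟨(a, b), a, rfl⟩
      map_rel' hab := boxProd_adj_left.mpr hab }
  exact hG.map f fun ⟨_, a, rfl⟩ => ⟨a, rfl⟩

variable {H}

theorem top_isMinorOf_boxProd (hG : G.Connected) {r : β} {leaf : α → β}
    (hleaf : Function.Injective leaf) (hr : ∀ a, H.Adj r (leaf a)) :
    (⊤ : SimpleGraph α).IsMinorOf (G □ H) := by
  refine ⟨fun v => {(v, r)} ∪ Set.range fun a => (a, leaf v), fun v => ?_, ?_, ?_⟩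
  · exact connected_induce_union Preconnected.of_subsingleton
      (hG.induce_range_boxProd_left H (leaf v)).preconnected rfl ⟨v, rfl⟩
      (boxProd_adj_right.mpr (hr v))
  · intro v w hvw
    simp [Set.disjoint_range_iff, hvw.symm, (hr v).ne', (hr w).ne', hleaf.ne hvw]
  · intro v w _
    exact ⟨(v, r), .inl rfl, (v, leaf w), .inr ⟨v, rfl⟩, boxProd_adj_right.mpr (hr w)⟩

end SimpleGraph

theorem stmt1_general (n : ℕ) (G : SimpleGraph (Fin n)) (hG : G.Connected) :
    (⊤ : SimpleGraph (Fin n)).IsMinorOf (G.boxProd (_root_.starGraph n)) :=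
  top_isMinorOf_boxProd (r := none) hG (Option.some_injective _) fun _ => by simp [_root_.starGraph]

/-- For any positive `n` and any connected graph `G` on `n` vertices, `K_n` is a
minor of `G □ S_n`, where `S_n` is the star with `n` leaves. -/
theorem stmt1 (n : ℕ) (hn : 0 < n) (G : SimpleGraph (Fin n)) (hG : G.Connected) :
    (⊤ : SimpleGraph (Fin n)).IsMinorOf (G.boxProd (_root_.starGraph n)) :=
  stmt1_general n G hG
end

section
/- Let G be a bipartite graph with bipartition {A, B}, let S be a star with at least |A| leaves, and let T be any tree with at least |B| vertices. Then G is a minor of the Cartesian product S □ T. -/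
/-!
Model each vertex `a ∈ A` by a whole fibre `{ℓ a} × T` over its own leaf `ℓ a` of the star, and
each vertex `b ∈ B` by a single vertex `(root, τ b)`, where `τ` injects `B` into `T`. Fibres are
connected copies of `T` and pairwise disjoint, and an edge `ab` of `G` is realised by the edge
`(ℓ a, τ b) ~ (root, τ b)` of the product.
-/

open SimpleGraph

namespace SimpleGraph

variable {V α β : Type*}

lemma connected_induce_singleton (G : SimpleGraph V) (v : V) : (G.induce {v}).Connected := by
  rw [induce_singleton_eq_top]
  exact connected_top

lemma Connected.induce_fiber_boxProd {H : SimpleGraph β} (hH : H.Connected) (G : SimpleGraph α)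
    (a : α) : ((G □ H).induce {p | p.1 = a}).Connected := by
  have hfiber : {p : α × β | p.1 = a} = Set.range (G.boxProdRight H a) := by
    ext ⟨x, y⟩
    simp [eq_comm]
  rw [hfiber]
  exact (G.boxProdRight H a).isoInduceRange.connected_iff.mp hH

theorem isMinorOf_boxProd_of_bipartite {G : SimpleGraph V} {S : SimpleGraph α}
    {T : SimpleGraph β} (A : Set V) (hbip : ∀ ⦃u v⦄, G.Adj u v → (u ∈ A ↔ v ∉ A)) {r : α}
    (fA : A ↪ α) (hfA : ∀ a, S.Adj (fA a) r) (fB : ↥Aᶜ ↪ β) (hT : T.Connected) :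
    G.IsMinorOf (S □ T) := by
  classical
  let branch : V → Set (α × β) := fun v =>
    if h : v ∈ A then {p | p.1 = fA ⟨v, h⟩} else {(r, fB ⟨v, h⟩)}
  have hr : ∀ a, fA a ≠ r := fun a => (hfA a).ne
  have hedge : ∀ ⦃u v⦄, u ∈ A → v ∉ A → ∃ a ∈ branch u, ∃ b ∈ branch v, (S □ T).Adj a b := by
    intro u v hu hv
    refine ⟨(fA ⟨u, hu⟩, fB ⟨v, hv⟩), by simp [branch, hu], (r, fB ⟨v, hv⟩),
      by simp [branch, hv], boxProd_adj.mpr (Or.inl ⟨hfA _, rfl⟩)⟩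
  refine ⟨branch, fun v => ?_, fun u v huv => ?_, fun u v huv => ?_⟩
  · by_cases hv : v ∈ A
    · rw [show branch v = _ from dif_pos hv]
      exact hT.induce_fiber_boxProd S _
    · rw [show branch v = _ from dif_neg hv]
      exact (S □ T).connected_induce_singleton _
  · by_cases hu : u ∈ A <;> by_cases hv : v ∈ A <;>
      simp only [branch, hu, hv, dite_true, dite_false]
    · exact Set.disjoint_left.mpr fun p hpu hpv =>
        huv (congrArg Subtype.val (fA.injective (hpu.symm.trans hpv)))
    · exact Set.disjoint_singleton_right.mpr (hr _).symm
    · exact Set.disjoint_singleton_left.mpr (hr _).symm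
    · exact Set.disjoint_singleton.mpr fun h =>
        huv (congrArg Subtype.val (fB.injective (congrArg Prod.snd h)))
  · by_cases hu : u ∈ A
    · exact hedge hu ((hbip huv).mp hu)
    · obtain ⟨a, ha, b, hb, hab⟩ := hedge ((hbip huv.symm).mpr hu) hu
      exact ⟨b, hb, a, ha, hab.symm⟩

end SimpleGraph

lemma Set.nonempty_embedding_fin_of_ncard_le {V : Type*} [Finite V] {s : Set V} {n : ℕ}
    (h : s.ncard ≤ n) : Nonempty (s ↪ Fin n) := by
  have := Fintype.ofFinite s
  apply Function.Embedding.nonempty_of_card_le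
  rwa [Fintype.card_fin, ← Nat.card_eq_fintype_card, Nat.card_coe_set_eq]

/-- Let `G` be bipartite with bipartition `{A, B}`, let `S` be a star with at least
`|A|` leaves, and let `T` be a tree with at least `|B|` vertices. Then `G` is a minor
of `S □ T`. -/
theorem stmt15 (g m t : ℕ) (G : SimpleGraph (Fin g)) (A B : Set (Fin g))
    (hcover : A ∪ B = Set.univ) (hdisj : Disjoint A B)
    (hbip : ∀ u v, G.Adj u v → (u ∈ A ∧ v ∈ B) ∨ (u ∈ B ∧ v ∈ A))
    (hm : A.ncard ≤ m)
    (T : SimpleGraph (Fin t)) (hT : T.IsTree) (ht : B.ncard ≤ t) :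
    G.IsMinorOf ((_root_.starGraph m).boxProd T) := by
  obtain rfl : Aᶜ = B := (isCompl_iff.mpr ⟨hdisj, codisjoint_iff.mpr hcover⟩).compl_eq
  obtain ⟨fA⟩ := Set.nonempty_embedding_fin_of_ncard_le hm
  obtain ⟨fB⟩ := Set.nonempty_embedding_fin_of_ncard_le ht
  refine isMinorOf_boxProd_of_bipartite A (fun u v huv => ?_) (r := none)
    (fA.trans .some) (fun a => ?_) fB hT.connected
  · rcases hbip u v huv with ⟨hu, hv⟩ | ⟨hu, hv⟩ <;> simp_all
  · simp [_root_.starGraph]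
end
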